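/- Let f : ℝⁿ → ℝ be a multivariate quartic polynomial, t₀ > 0, and let x : [0,t₀] → ℝⁿ be a function differentiable on [0,t₀] whose derivative ẋ satisfies ∇_{xx}μ_f(x(t),t)·ẋ(t) + ∇_{tx}μ_f(x(t),t) = 0 for all t ∈ (0,t₀], and such that x and ẋ are continuous at t = 0. Then ẋ(0) lies in the null space of ∇²f(x(0)), i.e., ∇²f(x(0))·ẋ(0) = 0. In particular, if ∇²f(x(0)) is nonsingular, then lim_{t→0⁺} ẋ(t) = ẋ(0) = 0. -/

import Mathlib

open MeasureTheory Matrix Filter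

/-- Partial derivative of `f` in the `i`-th coordinate direction. -/
noncomputable def pd {n : ℕ} (i : Fin n) (f : (Fin n → ℝ) → ℝ) : (Fin n → ℝ) → ℝ :=
  fun x => fderiv ℝ f x (Pi.single i 1)

/-- The gradient of `f` at `x`, as a vector of first partial derivatives. -/
noncomputable def grad {n : ℕ} (f : (Fin n → ℝ) → ℝ) (x : Fin n → ℝ) : Fin n → ℝ :=
  fun i => pd i f x

/-- The Hessian matrix of `f` at `x`, of second partial derivatives. -/
noncomputable def hess {n : ℕ} (f : (Fin n → ℝ) → ℝ) (x : Fin n → ℝ) :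
    Matrix (Fin n) (Fin n) ℝ :=
  Matrix.of fun i j => pd i (pd j f) x

/-- The Steklov function `μ_f(x,t) = (1/(2t)^n) ∫_{x-t}^{x+t} ⋯ ∫ f`. -/
noncomputable def steklov {n : ℕ} (f : (Fin n → ℝ) → ℝ) (x : Fin n → ℝ) (t : ℝ) : ℝ :=
  (1 / (2 * t) ^ n) * ∫ τ in Set.univ.pi (fun i => Set.Icc (x i - t) (x i + t)), f τ

/-- `f` is a multivariate quartic polynomial: a polynomial of total degree at most 4. -/
def IsMQP {n : ℕ} (f : (Fin n → ℝ) → ℝ) : Prop :=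
  ∃ P : MvPolynomial (Fin n) ℝ, P.totalDegree ≤ 4 ∧ ∀ x, f x = MvPolynomial.eval x P

/-- The closed Euclidean (ℓ₂) ball of radius `L` centered at `0` in `ℝⁿ`. -/
def ball2 {n : ℕ} (L : ℝ) : Set (Fin n → ℝ) := {y | ∑ i, (y i) ^ 2 ≤ L ^ 2}

/-- The Euclidean (ℓ₂) norm of a vector. -/
noncomputable def l2norm {m : ℕ} (v : Fin m → ℝ) : ℝ := Real.sqrt (∑ i, (v i) ^ 2)

/-!
For a polynomial `f`, the Steklov mean `μ_f(y, t)` with `t > 0` is a polynomial in `y` and `t`: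
the mean of `s ↦ s ^ k` over `[a - t, a + t]` is `∑_{j even} (k choose j) / (j + 1) · a^(k-j) t^j`,
and `μ_f` of a monomial is the product of such one-dimensional means. Its `t⁰`-coefficient is `f`
and, since only even powers of `t` occur, its `t¹`-coefficient vanishes. So `∇ₓₓμ_f(y, t)` and
`∇ₜₓμ_f(y, t)` extend continuously to `t = 0` with values `∇²f(y)` and `0`, and letting `t → 0⁺`
in the ODE along the trajectory gives `∇²f(x(0))·ẋ(0) = 0`; a nonsingular Hessian forces `ẋ(0) = 0`.
-/

open MvPolynomial Topology
open scoped Polynomial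

theorem setIntegral_univ_pi_prod {ι 𝕜 : Type*} [Fintype ι] [RCLike 𝕜] {E : ι → Type*}
    [∀ i, MeasurableSpace (E i)] (μ : ∀ i, Measure (E i)) [∀ i, SigmaFinite (μ i)]
    (g : ∀ i, E i → 𝕜) (S : ∀ i, Set (E i)) :
    ∫ τ in Set.univ.pi S, ∏ i, g i (τ i) ∂Measure.pi μ = ∏ i, ∫ s in S i, g i s ∂μ i := by
  rw [Measure.restrict_pi_pi, integral_fintype_prod_eq_prod]

theorem Polynomial.coeff_one_prod_eq_zero {R ι : Type*} [CommSemiring R] (s : Finset ι)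
    (p : ι → R[X]) (h : ∀ i ∈ s, (p i).coeff 1 = 0) : (∏ i ∈ s, p i).coeff 1 = 0 :=
  Finset.prod_induction _ (fun q : R[X] => q.coeff 1 = 0)
    (fun a b ha hb => by
      rw [coeff_mul, Finset.Nat.sum_antidiagonal_eq_sum_range_succ_mk]
      simp [Finset.sum_range_succ, ha, hb]) (by rw [coeff_one]; simp) h

theorem MvPolynomial.hasFDerivAt_eval {𝕜 σ : Type*} [NontriviallyNormedField 𝕜] [Fintype σ]
    (P : MvPolynomial σ 𝕜) (y : σ → 𝕜) :
    HasFDerivAt (fun x => eval x P)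
      (∑ i, eval y (pderiv i P) • (ContinuousLinearMap.proj i : (σ → 𝕜) →L[𝕜] 𝕜)) y := by
  classical
  induction P using MvPolynomial.induction_on with
  | C a =>
    simp only [eval_C]
    refine (hasFDerivAt_const (𝕜 := 𝕜) a y).congr_fderiv ?_
    ext v
    simp
  | add p q hp hq =>
    simp only [map_add]
    refine (hp.fun_add hq).congr_fderiv ?_
    ext v
    simp [Finset.sum_add_distrib, add_mul]
  | mul_X p j hp =>
    simp only [map_mul, eval_X]
    refine (hp.fun_mul (hasFDerivAt_apply j y)).congr_fderiv ?_
    ext v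
    simp [Finset.sum_add_distrib, add_mul, pderiv_X, Pi.single_apply, Finset.mul_sum, apply_ite,
      mul_assoc]

section

variable {n : ℕ}

theorem pd_eval (i : Fin n) (P : MvPolynomial (Fin n) ℝ) :
    pd i (fun x => eval x P) = fun y => eval y (pderiv i P) := by
  funext y
  simp [pd, (hasFDerivAt_eval P y).fderiv, Pi.single_apply]

theorem hess_eval (P : MvPolynomial (Fin n) ℝ) (y : Fin n → ℝ) :
    hess (fun x => eval x P) y = of fun i j => eval y (pderiv i (pderiv j P)) := by
  ext i j
  simp [hess, pd_eval]

theorem grad_eval (P : MvPolynomial (Fin n) ℝ) (y : Fin n → ℝ) :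
    grad (fun x => eval x P) y = fun i => eval y (pderiv i P) := by
  ext i
  simp [grad, pd_eval]

-- `Q : ℝ[y₁, …, yₙ][t]` stands for the function `(y, t) ↦ eval y (Q.eval (C t))`, and
-- `pderivCoeffs i Q` for its partial derivative in `yᵢ`.
noncomputable def pderivCoeffs (i : Fin n) (Q : (MvPolynomial (Fin n) ℝ)[X]) :
    (MvPolynomial (Fin n) ℝ)[X] :=
  Q.sum fun r q => Polynomial.monomial r (pderiv i q)

theorem coeff_pderivCoeffs (i : Fin n) (Q : (MvPolynomial (Fin n) ℝ)[X]) (r : ℕ) :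
    (pderivCoeffs i Q).coeff r = pderiv i (Q.coeff r) := by
  simp only [pderivCoeffs, Polynomial.sum, Polynomial.finsetSum_coeff, Polynomial.coeff_monomial,
    Finset.sum_ite_eq', Polynomial.mem_support_iff, ite_not]
  split_ifs with h <;> simp [h]

theorem pderiv_eval_C (i : Fin n) (Q : (MvPolynomial (Fin n) ℝ)[X]) (t : ℝ) :
    pderiv i (Q.eval (C t)) = (pderivCoeffs i Q).eval (C t) := by
  rw [pderivCoeffs, Polynomial.sum, Polynomial.eval_finsetSum, Polynomial.eval_eq_sum,
    Polynomial.sum, map_sum]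
  simp [mul_comm]

theorem eval_eval_C_eq_eval_map (Q : (MvPolynomial (Fin n) ℝ)[X]) (y : Fin n → ℝ) (t : ℝ) :
    eval y (Q.eval (C t)) = (Q.map (eval y)).eval t := by
  rw [Polynomial.eval_map, ← Polynomial.eval₂_at_apply (eval y), eval_C]

theorem continuous_eval_eval_C (Q : (MvPolynomial (Fin n) ℝ)[X]) :
    Continuous fun p : (Fin n → ℝ) × ℝ => eval p.1 (Q.eval (C p.2)) := by
  simp only [Polynomial.eval_eq_sum, Polynomial.sum, map_sum, map_mul, map_pow, eval_C]
  exact continuous_finsetSum _ fun r _ =>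
    ((continuous_eval _).comp continuous_fst).mul (continuous_snd.pow r)

theorem hasDerivAt_eval_eval_C (Q : (MvPolynomial (Fin n) ℝ)[X]) (y : Fin n → ℝ) (t : ℝ) :
    HasDerivAt (fun s => eval y (Q.eval (C s))) (eval y (Q.derivative.eval (C t))) t := by
  simp only [eval_eval_C_eq_eval_map, ← Polynomial.derivative_map]
  exact Polynomial.hasDerivAt _ t

theorem hess_eval_eval_C (Q : (MvPolynomial (Fin n) ℝ)[X]) (t : ℝ) (y : Fin n → ℝ) :
    hess (fun x => eval x (Q.eval (C t))) y
      = of fun i j => eval y ((pderivCoeffs i (pderivCoeffs j Q)).eval (C t)) := by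
  simp only [hess_eval, pderiv_eval_C]

theorem grad_eval_eval_C (Q : (MvPolynomial (Fin n) ℝ)[X]) (t : ℝ) (y : Fin n → ℝ) :
    grad (fun x => eval x (Q.eval (C t))) y = fun i => eval y ((pderivCoeffs i Q).eval (C t)) := by
  simp only [grad_eval, pderiv_eval_C]

theorem tendsto_eval_eval_C (Q : (MvPolynomial (Fin n) ℝ)[X]) {x : ℝ → Fin n → ℝ}
    {x₀ : Fin n → ℝ} (hx : Tendsto x (𝓝[>] 0) (𝓝 x₀)) :
    Tendsto (fun t => eval (x t) (Q.eval (C t))) (𝓝[>] 0) (𝓝 (eval x₀ (Q.coeff 0))) := by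
  have h := ((continuous_eval_eval_C Q).tendsto (x₀, 0)).comp
    (hx.prodMk_nhds (tendsto_nhdsWithin_of_tendsto_nhds tendsto_id))
  rw [Polynomial.coeff_zero_eq_eval_zero, ← map_zero (C : ℝ →+* MvPolynomial (Fin n) ℝ)]
  exact h

theorem hess_mulVec_add_grad_eq_zero_of_ode {F : (Fin n → ℝ) → ℝ → ℝ}
    (Q : (MvPolynomial (Fin n) ℝ)[X])
    (hF : ∀ t > 0, (fun y => F y t) = fun y => eval y (Q.eval (C t)))
    {x v : ℝ → Fin n → ℝ} {x₀ v₀ : Fin n → ℝ}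
    (hx : Tendsto x (𝓝[>] 0) (𝓝 x₀)) (hv : Tendsto v (𝓝[>] 0) (𝓝 v₀))
    (hode : ∀ᶠ t in 𝓝[>] 0, hess (fun y => F y t) (x t) *ᵥ v t
        + (fun i => deriv (fun s => grad (fun y => F y s) (x t) i) t) = 0) :
    hess (fun y => eval y (Q.coeff 0)) x₀ *ᵥ v₀ + grad (fun y => eval y (Q.coeff 1)) x₀ = 0 := by
  set G : ℝ → Fin n → ℝ := fun t =>
    (of fun i j => eval (x t) ((pderivCoeffs i (pderivCoeffs j Q)).eval (C t))) *ᵥ v t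
      + fun i => eval (x t) ((pderivCoeffs i Q).derivative.eval (C t))
  have hG : ∀ t > 0, hess (fun y => F y t) (x t) *ᵥ v t
      + (fun i => deriv (fun s => grad (fun y => F y s) (x t) i) t) = G t := by
    intro t ht
    have hderiv : ∀ i, deriv (fun s => grad (fun y => F y s) (x t) i) t
        = eval (x t) ((pderivCoeffs i Q).derivative.eval (C t)) := by
      intro i
      refine ((hasDerivAt_eval_eval_C _ (x t) t).congr_of_eventuallyEq ?_).deriv
      filter_upwards [Ioi_mem_nhds ht] with s hs
      rw [hF s hs, grad_eval_eval_C]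
    rw [hF t ht, hess_eval_eval_C]
    exact congrArg _ (funext hderiv)
  have hlim : Tendsto G (𝓝[>] 0)
      (𝓝 (hess (fun y => eval y (Q.coeff 0)) x₀ *ᵥ v₀
        + grad (fun y => eval y (Q.coeff 1)) x₀)) := by
    rw [tendsto_pi_nhds]
    intro i
    simp only [G, hess_eval, grad_eval, Pi.add_apply, mulVec, dotProduct, of_apply]
    refine (tendsto_finsetSum _ fun j _ => ?_).add ?_
    · have h := (tendsto_eval_eval_C (pderivCoeffs i (pderivCoeffs j Q)) hx).mul
        ((continuous_apply j).continuousAt.tendsto.comp hv)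
      rwa [coeff_pderivCoeffs, coeff_pderivCoeffs] at h
    · have h := tendsto_eval_eval_C (pderivCoeffs i Q).derivative hx
      rwa [Polynomial.coeff_derivative, coeff_pderivCoeffs, zero_add, Nat.cast_zero, zero_add,
        mul_one] at h
  refine tendsto_nhds_unique hlim (tendsto_const_nhds.congr' ?_)
  filter_upwards [hode, self_mem_nhdsWithin] with t hode_t ht
  rw [← hG t ht, hode_t]

noncomputable def meanPowCoeff (k j : ℕ) : ℝ := if Even j then k.choose j / (j + 1) else 0

theorem setIntegral_Icc_sub_add_pow (a : ℝ) {t : ℝ} (ht : 0 ≤ t) (k : ℕ) :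
    ∫ s in Set.Icc (a - t) (a + t), s ^ k
      = 2 * t * ∑ j ∈ Finset.range (k + 1), meanPowCoeff k j * a ^ (k - j) * t ^ j := by
  rw [integral_Icc_eq_integral_Ioc, ← intervalIntegral.integral_of_le (by linarith), integral_pow,
    show a + t = t + a by ring, show a - t = -t + a by ring, add_pow, add_pow,
    ← Finset.sum_sub_distrib, Finset.sum_range_succ', Finset.mul_sum]
  simp only [pow_zero, sub_self, add_zero, Nat.add_sub_add_right]
  rw [Finset.sum_div]
  refine Finset.sum_congr rfl fun j _ => ?_
  have hchoose : ((k + 1).choose (j + 1) : ℝ) * (j + 1) = (k + 1) * k.choose j := by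
    exact_mod_cast (Nat.add_one_mul_choose_eq k j).symm
  rcases Nat.even_or_odd j with hj' | hj'
  · rw [hj'.add_one.neg_pow, meanPowCoeff, if_pos hj']
    field_simp
    linear_combination (2 * t ^ (j + 1) * a ^ (k - j)) * hchoose
  · rw [hj'.add_one.neg_pow, meanPowCoeff, if_neg (Nat.not_even_iff_odd.2 hj')]
    simp

noncomputable def meanPowPoly (k : ℕ) (i : Fin n) : (MvPolynomial (Fin n) ℝ)[X] :=
  ∑ j ∈ Finset.range (k + 1), Polynomial.monomial j (meanPowCoeff k j • X i ^ (k - j))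

noncomputable def steklovPoly (P : MvPolynomial (Fin n) ℝ) : (MvPolynomial (Fin n) ℝ)[X] :=
  ∑ m ∈ P.support, P.coeff m • ∏ i, meanPowPoly (m i) i

theorem eval_meanPowPoly (k : ℕ) (i : Fin n) (y : Fin n → ℝ) (t : ℝ) :
    eval y ((meanPowPoly k i).eval (C t))
      = ∑ j ∈ Finset.range (k + 1), meanPowCoeff k j * y i ^ (k - j) * t ^ j := by
  simp only [meanPowPoly, Polynomial.eval_finsetSum, Polynomial.eval_monomial, map_sum, map_mul,
    map_pow, smul_eval, eval_X, eval_C]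

theorem coeff_zero_meanPowPoly (k : ℕ) (i : Fin n) : (meanPowPoly k i).coeff 0 = X i ^ k := by
  simp [meanPowPoly, Polynomial.finsetSum_coeff, Polynomial.coeff_monomial, meanPowCoeff]

theorem coeff_one_meanPowPoly (k : ℕ) (i : Fin n) : (meanPowPoly k i).coeff 1 = 0 := by
  simp [meanPowPoly, Polynomial.finsetSum_coeff, Polynomial.coeff_monomial, meanPowCoeff]

theorem coeff_zero_steklovPoly (P : MvPolynomial (Fin n) ℝ) : (steklovPoly P).coeff 0 = P := by
  simp only [steklovPoly, Polynomial.finsetSum_coeff, Polynomial.coeff_smul,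
    Polynomial.coeff_zero_prod, coeff_zero_meanPowPoly]
  conv_rhs => rw [P.as_sum]
  refine Finset.sum_congr rfl fun m _ => ?_
  rw [monomial_eq, Finsupp.prod_fintype _ _ fun i => pow_zero (X i), smul_eq_C_mul]

theorem coeff_one_steklovPoly (P : MvPolynomial (Fin n) ℝ) : (steklovPoly P).coeff 1 = 0 := by
  simp [steklovPoly, Polynomial.finsetSum_coeff, Polynomial.coeff_smul,
    Polynomial.coeff_one_prod_eq_zero, coeff_one_meanPowPoly]

theorem steklov_eval (P : MvPolynomial (Fin n) ℝ) {t : ℝ} (ht : 0 < t) (y : Fin n → ℝ) :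
    steklov (fun τ => eval τ P) y t = eval y ((steklovPoly P).eval (C t)) := by
  have hmonomial (m : Fin n →₀ ℕ) :
      ∫ τ in Set.univ.pi fun i => Set.Icc (y i - t) (y i + t), ∏ i, τ i ^ m i
        = (2 * t) ^ n * ∏ i, eval y ((meanPowPoly (m i) i).eval (C t)) := by
    rw [volume_pi, setIntegral_univ_pi_prod (fun _ => volume) (fun i s => s ^ m i)]
    simp only [setIntegral_Icc_sub_add_pow _ ht.le, eval_meanPowPoly, Finset.prod_mul_distrib,
      Finset.prod_const, Finset.card_univ, Fintype.card_fin, mul_pow]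
  have hint (m : Fin n →₀ ℕ) : IntegrableOn (fun τ : Fin n → ℝ => P.coeff m * ∏ i, τ i ^ m i)
      (Set.univ.pi fun i => Set.Icc (y i - t) (y i + t)) := by
    rw [Set.pi_univ_Icc]
    exact Continuous.integrableOn_Icc (by fun_prop)
  simp_rw [steklov, eval_eq' _ P]
  rw [integral_finsetSum _ fun m _ => hint m]
  simp_rw [integral_const_mul, hmonomial, steklovPoly, Polynomial.eval_finsetSum,
    Polynomial.eval_smul, Polynomial.eval_prod, map_sum, smul_eval, map_prod, Finset.mul_sum]
  refine Finset.sum_congr rfl fun m _ => ?_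
  field_simp

end

theorem trajectory_limit_in_nullspace_general {n : ℕ} (f : (Fin n → ℝ) → ℝ) (hf : IsMQP f)
    (t₀ : ℝ) (ht₀ : 0 < t₀)
    (x xd : ℝ → (Fin n → ℝ))
    (hxcont : ContinuousWithinAt x (Set.Icc 0 t₀) 0)
    (hxdcont : ContinuousWithinAt xd (Set.Icc 0 t₀) 0)
    (hode : ∀ t ∈ Set.Ioc (0 : ℝ) t₀,
      (hess (fun y => steklov f y t) (x t)).mulVec (xd t)
        + (fun i => deriv (fun s => grad (fun y => steklov f y s) (x t) i) t) = 0) :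
    (hess f (x 0)).mulVec (xd 0) = 0
    ∧ (IsUnit (hess f (x 0)).det →
        xd 0 = 0 ∧ Tendsto xd (nhdsWithin 0 (Set.Ioi 0)) (nhds 0)) := by
  obtain ⟨P, -, hfP⟩ := hf
  obtain rfl : f = fun τ => eval τ P := funext hfP
  have hright : 𝓝[>] (0 : ℝ) ≤ 𝓝[Set.Icc 0 t₀] 0 := by
    rw [← nhdsWithin_Ioc_eq_nhdsGT ht₀]
    exact nhdsWithin_mono _ Set.Ioc_subset_Icc_self
  have hxd : Tendsto xd (𝓝[>] 0) (𝓝 (xd 0)) := hxdcont.tendsto.mono_left hright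
  have hnull := hess_mulVec_add_grad_eq_zero_of_ode (steklovPoly P)
    (fun t ht => funext (steklov_eval P ht)) (hxcont.tendsto.mono_left hright) hxd
    (eventually_of_mem (Ioc_mem_nhdsGT ht₀) hode)
  rw [coeff_zero_steklovPoly, coeff_one_steklovPoly, grad_eval] at hnull
  simp only [map_zero, ← Pi.zero_def, add_zero] at hnull
  refine ⟨hnull, fun hdet => ?_⟩
  have hxd0 : xd 0 = 0 := eq_zero_of_mulVec_eq_zero hdet.ne_zero hnull
  exact ⟨hxd0, hxd0 ▸ hxd⟩

/-- If `x : [0,t₀] → ℝⁿ` is differentiable with derivative `ẋ`, with `x` and `ẋ` continuous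
at `t = 0`, and satisfies the ODE `∇ₓₓμ_f(x(t),t)·ẋ(t) + ∇ₜₓμ_f(x(t),t) = 0` on `(0,t₀]`,
then `ẋ(0)` lies in the null space of `∇²f(x(0))`; in particular, if `∇²f(x(0))` is
nonsingular, then `lim_{t→0⁺} ẋ(t) = ẋ(0) = 0`. -/
theorem trajectory_limit_in_nullspace {n : ℕ} (f : (Fin n → ℝ) → ℝ) (hf : IsMQP f)
    (t₀ : ℝ) (ht₀ : 0 < t₀)
    (x xd : ℝ → (Fin n → ℝ))
    (hdiff : ∀ t ∈ Set.Icc (0 : ℝ) t₀, HasDerivWithinAt x (xd t) (Set.Icc 0 t₀) t)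
    (hxcont : ContinuousWithinAt x (Set.Icc 0 t₀) 0)
    (hxdcont : ContinuousWithinAt xd (Set.Icc 0 t₀) 0)
    (hode : ∀ t ∈ Set.Ioc (0 : ℝ) t₀,
      (hess (fun y => steklov f y t) (x t)).mulVec (xd t)
        + (fun i => deriv (fun s => grad (fun y => steklov f y s) (x t) i) t) = 0) :
    (hess f (x 0)).mulVec (xd 0) = 0
    ∧ (IsUnit (hess f (x 0)).det →
        xd 0 = 0 ∧ Tendsto xd (nhdsWithin 0 (Set.Ioi 0)) (nhds 0)) :=
  trajectory_limit_in_nullspace_general f hf t₀ ht₀ x xd hxcont hxdcont hode
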